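/- arXiv:2001.10498 — 4 statements merged into one kernel-verified Lean document; each statement's English description precedes it below -/
import Mathlib

section
/- Let T be a tree with n ≥ 3 vertices such that no two vertices of degree 2 are adjacent and no leaf is adjacent to a vertex of degree 2. Then T has at least (n+5)/3 leaves. -/
/-!
Let `ℓ` and `d₂` count the vertices of degree `1` and `2`. All other vertices have degree at
least `3`, so the handshake lemma `∑ deg = 2(n - 1)` gives `n + 2 ≤ 2ℓ + d₂`. The hypotheses,
together with the fact that two leaves of a tree on at least three vertices are never adjacent,
make the vertices of degree at most `2` independent, so their `ℓ + 2d₂` incident edges are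
distinct: `ℓ + 2d₂ ≤ n - 1`. Eliminating `d₂` gives `n + 5 ≤ 3ℓ`.
-/

open Finset

namespace SimpleGraph

variable {V : Type*} [Fintype V] {G : SimpleGraph V} [DecidableRel G.Adj]

theorem IsIndepSet.sum_degree_le_card_edgeFinset [DecidableEq V] {s : Finset V}
    (hs : G.IsIndepSet s) : ∑ v ∈ s, G.degree v ≤ #G.edgeFinset := by
  have hdisj : (s : Set V).PairwiseDisjoint (G.incidenceFinset ·) := by
    intro v hv w hw hvw
    rw [Function.onFun, ← disjoint_coe, coe_incidenceFinset, coe_incidenceFinset,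
      Set.disjoint_iff_inter_eq_empty]
    exact G.incidenceSet_inter_incidenceSet_of_not_adj (hs hv hw hvw) hvw
  calc ∑ v ∈ s, G.degree v = #(s.biUnion (G.incidenceFinset ·)) := by
        simp only [card_biUnion hdisj, card_incidenceFinset_eq_degree]
    _ ≤ #G.edgeFinset := card_le_card (biUnion_subset.mpr fun v _ ↦ G.incidenceFinset_subset v)

theorem Connected.not_adj_of_degree_eq_one [DecidableEq V] (hG : G.Connected)
    (hV : 2 < Fintype.card V) {v w : V} (hv : G.degree v = 1) (hw : G.degree w = 1) :
    ¬ G.Adj v w := by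
  intro hvw
  obtain ⟨u, -, hu⟩ := exists_mem_notMem_of_card_lt_card
    (card_le_two.trans_lt hV : #{v, w} < #(univ : Finset V))
  simp only [mem_insert, mem_singleton, not_or] at hu
  -- Deleting the leaf `v` keeps `w` connected to a third vertex, so `w` has a neighbour `≠ v`.
  have hreach : (G.induce {v}ᶜ).Reachable ⟨w, hvw.ne.symm⟩ ⟨u, hu.1⟩ :=
    (hG.induce_compl_singleton_of_degree_eq_one hv).preconnected _ _
  obtain ⟨x, hwx⟩ :=
    hreach.nonempty_neighborSet_left (by simpa [Subtype.ext_iff] using Ne.symm hu.2)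
  obtain ⟨y, -, hy⟩ := degree_eq_one_iff_existsUnique_adj.mp hw
  exact x.2 ((hy _ hwx).trans (hy v hvw.symm).symm)

theorem sum_degree_filter_degree_le_two :
    ∑ v ∈ univ.filter (fun v ↦ G.degree v ≤ 2), G.degree v =
      #(univ.filter fun v ↦ G.degree v = 1) + 2 * #(univ.filter fun v ↦ G.degree v = 2) := by
  rw [sum_filter, card_filter, card_filter, mul_sum, ← sum_add_distrib]
  refine sum_congr rfl fun v _ ↦ ?_
  split_ifs <;> omega

theorem three_mul_card_le_sum_degree_add (hpos : ∀ v, 0 < G.degree v) :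
    3 * Fintype.card V ≤ ∑ v, G.degree v + 2 * #(univ.filter fun v ↦ G.degree v = 1) +
      #(univ.filter fun v ↦ G.degree v = 2) := by
  rw [card_filter, card_filter, ← card_univ, card_eq_sum_ones, mul_sum, mul_sum, ← sum_add_distrib,
    ← sum_add_distrib]
  refine sum_le_sum fun v _ ↦ ?_
  have := hpos v
  split_ifs <;> omega

end SimpleGraph

open SimpleGraph in
/-- Let `T` be a tree with `n ≥ 3` vertices such that no two vertices of degree 2 are
adjacent and no leaf is adjacent to a vertex of degree 2. Then `T` has at least
`(n+5)/3` leaves, i.e. `3ℓ ≥ n + 5`. -/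
theorem tree_many_leaves {V : Type*} [Fintype V] [DecidableEq V]
    (G : SimpleGraph V) [DecidableRel G.Adj] (hT : G.IsTree)
    (n : ℕ) (hn : Fintype.card V = n) (h3 : 3 ≤ n)
    (h22 : ∀ v w, G.Adj v w → G.degree v = 2 → G.degree w ≠ 2)
    (h12 : ∀ v w, G.Adj v w → G.degree v = 1 → G.degree w ≠ 2) :
    n + 5 ≤ 3 * (Finset.univ.filter (fun v => G.degree v = 1)).card := by
  have hV : 2 < Fintype.card V := by omega
  have : Nontrivial V := Fintype.one_lt_card_iff_nontrivial.mp (by omega)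
  have hpos : ∀ v, 0 < G.degree v := fun v ↦ hT.connected.preconnected.degree_pos_of_nontrivial v
  have hindep : G.IsIndepSet (univ.filter fun v ↦ G.degree v ≤ 2 : Finset V) := by
    intro v hv w hw _ hvw
    simp only [coe_filter, mem_univ, true_and, Set.mem_ofPred_eq] at hv hw
    obtain hv | hv : G.degree v = 1 ∨ G.degree v = 2 := by have := hpos v; omega
    all_goals obtain hw | hw : G.degree w = 1 ∨ G.degree w = 2 := by have := hpos w; omega
    · exact hT.connected.not_adj_of_degree_eq_one hV hv hw hvw
    · exact h12 v w hvw hv hw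
    · exact h12 w v hvw.symm hw hv
    · exact h22 v w hvw hv hw
  have hedges := hindep.sum_degree_le_card_edgeFinset
  rw [sum_degree_filter_degree_le_two] at hedges
  have hdegrees := three_mul_card_le_sum_degree_add hpos
  have hhandshake := G.sum_degrees_eq_twice_card_edges
  have htree_edges := hT.card_edgeFinset
  omega
end

section
/- Let T be a tree with n ≥ 3 vertices such that no two vertices of degree 2 are adjacent and no leaf is adjacent to a vertex of degree 2. Then the sum of the degrees of the vertices of degree at least 3 is at least n − 1, i.e. Σ_{v : deg(v) ≥ 3} deg(v) ≥ n − 1. -/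
/-!
Under the two adjacency conditions, every edge of the tree has an endpoint of degree at least `3`:
an edge between two leaves would be the whole tree, and every other edge between vertices of
degree at most `2` is excluded outright. So the vertices of degree at least `3` cover all `n - 1`
edges, and summing their degrees counts each edge at least once.
-/

namespace SimpleGraph

variable {V : Type*} {G : SimpleGraph V}

theorem eq_of_adj_of_adj_of_degree_eq_one {a b c : V} [Fintype (G.neighborSet a)]
    (ha : G.degree a = 1) (hab : G.Adj a b) (hac : G.Adj a c) : c = b :=
  (degree_eq_one_iff_existsUnique_adj.1 ha).unique hac hab

theorem Connected.eq_or_eq_of_adj_of_degree_eq_one [G.LocallyFinite] (hG : G.Connected)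
    {a b : V} (hab : G.Adj a b) (ha : G.degree a = 1) (hb : G.degree b = 1) (c : V) :
    c = a ∨ c = b := by
  by_contra hc
  obtain ⟨d, -, hd_fst, hd_snd⟩ :=
    (hG.preconnected a c).some.exists_boundary_dart {a, b} (by simp) hc
  rcases hd_fst with hd | hd
  · exact hd_snd (.inr (eq_of_adj_of_adj_of_degree_eq_one ha hab (hd ▸ d.adj)))
  · exact hd_snd (.inl (eq_of_adj_of_adj_of_degree_eq_one hb hab.symm (hd ▸ d.adj)))

theorem Connected.card_le_two_of_adj_of_degree_eq_one [Fintype V] [DecidableRel G.Adj]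
    (hG : G.Connected) {a b : V} (hab : G.Adj a b) (ha : G.degree a = 1) (hb : G.degree b = 1) :
    Fintype.card V ≤ 2 := by
  classical
  have hsub : (Finset.univ : Finset V) ⊆ {a, b} := fun c _ => by
    simpa using hG.eq_or_eq_of_adj_of_degree_eq_one hab ha hb c
  simpa using (Finset.card_le_card hsub).trans Finset.card_le_two

theorem IsVertexCover.card_edgeFinset_le_sum_degree [Fintype V] [DecidableRel G.Adj]
    {s : Finset V} (hs : G.IsVertexCover s) : G.edgeFinset.card ≤ ∑ v ∈ s, G.degree v := by
  classical
  have hcover : G.edgeFinset ⊆ s.biUnion (G.incidenceFinset ·) := by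
    intro e he
    induction e with
    | h v w =>
      have hvw : G.Adj v w := mem_edgeFinset.1 he
      rcases hs hvw with hv | hw
      · exact Finset.mem_biUnion.2 ⟨v, hv, (G.mem_incidenceFinset _ _).2 ⟨hvw, by simp⟩⟩
      · exact Finset.mem_biUnion.2 ⟨w, hw, (G.mem_incidenceFinset _ _).2 ⟨hvw, by simp⟩⟩
  calc G.edgeFinset.card ≤ (s.biUnion (G.incidenceFinset ·)).card := Finset.card_le_card hcover
    _ ≤ ∑ v ∈ s, (G.incidenceFinset v).card := Finset.card_biUnion_le
    _ = ∑ v ∈ s, G.degree v := by simp only [card_incidenceFinset_eq_degree]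

theorem Connected.isVertexCover_three_le_degree [Fintype V] [DecidableRel G.Adj]
    (hG : G.Connected) (hV : 3 ≤ Fintype.card V)
    (h22 : ∀ v w, G.Adj v w → G.degree v = 2 → G.degree w ≠ 2)
    (h12 : ∀ v w, G.Adj v w → G.degree v = 1 → G.degree w ≠ 2) :
    G.IsVertexCover {v | 3 ≤ G.degree v} := by
  intro v w hvw
  by_contra! hlow
  have hv : G.degree v < 3 := not_le.1 hlow.1
  have hw : G.degree w < 3 := not_le.1 hlow.2
  have hv0 : 0 < G.degree v := G.degree_pos_iff_exists_adj v |>.2 ⟨w, hvw⟩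
  have hw0 : 0 < G.degree w := G.degree_pos_iff_exists_adj w |>.2 ⟨v, hvw.symm⟩
  interval_cases hdv : G.degree v <;> interval_cases hdw : G.degree w
  · have := hG.card_le_two_of_adj_of_degree_eq_one hvw hdv hdw
    omega
  · exact h12 v w hvw hdv hdw
  · exact h12 w v hvw.symm hdw hdv
  · exact h22 v w hvw hdv hdw

end SimpleGraph

theorem tree_high_degree_sum_general {V : Type*} [Fintype V]
    (G : SimpleGraph V) [DecidableRel G.Adj] (hT : G.IsTree)
    (n : ℕ) (hn : Fintype.card V = n) (h3 : 3 ≤ n)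
    (h22 : ∀ v w, G.Adj v w → G.degree v = 2 → G.degree w ≠ 2)
    (h12 : ∀ v w, G.Adj v w → G.degree v = 1 → G.degree w ≠ 2) :
    n - 1 ≤ ∑ v ∈ Finset.univ.filter (fun v => 3 ≤ G.degree v), G.degree v := by
  have hcover : G.IsVertexCover ↑(Finset.univ.filter (fun v => 3 ≤ G.degree v)) := by
    simpa using hT.connected.isVertexCover_three_le_degree (hn ▸ h3) h22 h12
  have hedges := hT.card_edgeFinset
  have := hcover.card_edgeFinset_le_sum_degree
  omega

/-- Let `T` be a tree with `n ≥ 3` vertices such that no two vertices of degree 2 are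
adjacent and no leaf is adjacent to a vertex of degree 2. Then the sum of the degrees
of the vertices of degree at least `3` is at least `n − 1`. -/
theorem tree_high_degree_sum {V : Type*} [Fintype V] [DecidableEq V]
    (G : SimpleGraph V) [DecidableRel G.Adj] (hT : G.IsTree)
    (n : ℕ) (hn : Fintype.card V = n) (h3 : 3 ≤ n)
    (h22 : ∀ v w, G.Adj v w → G.degree v = 2 → G.degree w ≠ 2)
    (h12 : ∀ v w, G.Adj v w → G.degree v = 1 → G.degree w ≠ 2) :
    n - 1 ≤ ∑ v ∈ Finset.univ.filter (fun v => 3 ≤ G.degree v), G.degree v :=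
  tree_high_degree_sum_general G hT n hn h3 h22 h12
end

section
/- Let F be a forest with D ≥ 1 connected components, each of which has at least 3 vertices, and suppose that in F no two vertices of degree 2 are adjacent and no leaf is adjacent to a vertex of degree 2. Then 3·ℓ ≥ n + 5D, where n is the number of vertices of F and ℓ is the number of leaves of F. -/
/-!
Each component of a forest is a tree, so the degrees sum to `2n - 2D`. Under the hypotheses,
the vertices of degree at most 2 (all of degree 1 or 2, since components have at least three
vertices) form an independent set, so every edge at such a vertex ends at a vertex of degree
at least 3. Comparing the degree sums over the two sides gives the bound.
-/

open Finset

namespace SimpleGraph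

variable {V : Type*} [Fintype V] {G : SimpleGraph V} [DecidableRel G.Adj]

lemma IsAcyclic.sum_degree_component_add_two [DecidableEq G.ConnectedComponent] (hG : G.IsAcyclic)
    (c : G.ConnectedComponent) :
    ∑ v with G.connectedComponentMk v = c, G.degree v + 2 =
      2 * #{v | G.connectedComponentMk v = c} := by
  classical
  have hdeg (v : c) : c.toSimpleGraph.degree v = G.degree v := by
    convert degree_induce_of_neighborSet_subset fun _ ↦ c.mem_supp_of_adj_mem_supp v.2 using 2 <;>
      rfl
  have hedges := (hG.isTree_connectedComponent c).card_edgeFinset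
  have hsum := c.toSimpleGraph.sum_degrees_eq_twice_card_edges
  simp only [hdeg] at hsum
  rw [sum_subtype _ (p := (· ∈ c)) fun v ↦ by rw [mem_filter_univ]; rfl, hsum,
    ← Fintype.card_subtype]
  have hcard : Fintype.card {v // G.connectedComponentMk v = c} = Fintype.card c :=
    Fintype.card_congr (.refl _)
  omega

theorem IsAcyclic.sum_degrees_add_two_mul_card_connectedComponent (hG : G.IsAcyclic) :
    ∑ v, G.degree v + 2 * Nat.card G.ConnectedComponent = 2 * Fintype.card V := by
  classical
  calc ∑ v, G.degree v + 2 * Nat.card G.ConnectedComponent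
      = ∑ c, (∑ v with G.connectedComponentMk v = c, G.degree v + 2) := by
        rw [sum_add_distrib, sum_fiberwise univ G.connectedComponentMk]
        simp [Nat.card_eq_fintype_card, mul_comm]
    _ = ∑ c, 2 * #{v | G.connectedComponentMk v = c} :=
        sum_congr rfl fun c _ ↦ hG.sum_degree_component_add_two c
    _ = 2 * Fintype.card V := by
        rw [← mul_sum, ← card_univ,
          card_eq_sum_card_fiberwise (f := G.connectedComponentMk) fun _ _ ↦ mem_univ _]

lemma one_le_degree_of_one_lt_card_supp {v : V}
    (h : 1 < Nat.card (G.connectedComponentMk v).supp) : 1 ≤ G.degree v := by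
  obtain ⟨w, hw, hwv⟩ := (G.connectedComponentMk v).supp.exists_ne_of_one_lt_ncard h v
  exact (ConnectedComponent.exact hw).symm.degree_pos_left hwv.symm

lemma card_supp_le_two_of_adj_of_degree_eq_one {v w : V} (hvw : G.Adj v w)
    (hv : G.degree v = 1) (hw : G.degree w = 1) :
    Nat.card (G.connectedComponentMk v).supp ≤ 2 := by
  classical
  have hsub : (G.connectedComponentMk v).supp ⊆ ({v, w} : Finset V) := by
    intro u hu
    suffices u ∈ (G.subgraphOfAdj hvw).verts by simpa using this
    refine (ConnectedComponent.exact hu).symm.mem_subgraphVerts ?_ (by simp)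
    rintro x (rfl | rfl) y hxy
    · obtain rfl := (degree_eq_one_iff_existsUnique_adj.mp hv).unique hxy hvw
      simp
    · obtain rfl := (degree_eq_one_iff_existsUnique_adj.mp hw).unique hxy hvw.symm
      simp
  exact (Nat.card_mono (Set.toFinite _) hsub).trans (by simpa using card_le_two)

lemma IsIndepSet.sum_degree_le_sum_degree_compl [DecidableEq V] {s : Finset V}
    (hs : G.IsIndepSet s) : ∑ v ∈ s, G.degree v ≤ ∑ v ∈ sᶜ, G.degree v := by
  calc ∑ v ∈ s, G.degree v = ∑ v ∈ s, #(sᶜ.bipartiteAbove G.Adj v) := by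
        refine sum_congr rfl fun v hv ↦ ?_
        rw [← card_neighborFinset_eq_degree]
        congr 1
        ext w
        simp only [mem_neighborFinset, bipartiteAbove, mem_filter, mem_compl]
        exact ⟨fun h ↦ ⟨fun hw ↦ hs hv hw h.ne h, h⟩, And.right⟩
    _ = ∑ w ∈ sᶜ, #(s.bipartiteBelow G.Adj w) :=
        sum_card_bipartiteAbove_eq_sum_card_bipartiteBelow _
    _ ≤ ∑ w ∈ sᶜ, G.degree w := by
        refine sum_le_sum fun w _ ↦ ?_
        rw [← card_neighborFinset_eq_degree]
        exact card_le_card fun v hv ↦ (G.mem_neighborFinset _ _).mpr (mem_filter.mp hv).2.symm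

lemma sum_degree_filter_le_two_add_card_leaves (hpos : ∀ v, 1 ≤ G.degree v) :
    ∑ v with G.degree v ≤ 2, G.degree v + #{v | G.degree v = 1} =
      2 * #{v | G.degree v ≤ 2} := by
  have hleaves : #{v | G.degree v = 1} = #{v ∈ {v | G.degree v ≤ 2} | G.degree v = 1} := by
    congr 1
    ext v
    simp only [mem_filter, mem_univ, true_and]
    omega
  rw [hleaves, card_filter, ← sum_add_distrib, mul_comm, ← smul_eq_mul, ← sum_const]
  refine sum_congr rfl fun v hv ↦ ?_
  rw [mem_filter] at hv
  rcases (by have := hpos v; omega : G.degree v = 1 ∨ G.degree v = 2) with h | h <;> simp [h]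

lemma isIndepSet_filter_degree_le_two (hcomp : ∀ c : G.ConnectedComponent, 3 ≤ Nat.card c.supp)
    (h22 : ∀ v w, G.Adj v w → G.degree v = 2 → G.degree w ≠ 2)
    (h12 : ∀ v w, G.Adj v w → G.degree v = 1 → G.degree w ≠ 2) :
    G.IsIndepSet ({v | G.degree v ≤ 2} : Finset V) := by
  have hdeg (u : V) (hu : G.degree u ≤ 2) : G.degree u = 1 ∨ G.degree u = 2 := by
    have := one_le_degree_of_one_lt_card_supp <|
      (hcomp (G.connectedComponentMk u)).trans_lt' (by norm_num)
    omega
  intro v hv w hw _ hvw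
  simp only [coe_filter, mem_univ, true_and, Set.mem_ofPred_eq] at hv hw
  rcases hdeg v hv with hv | hv <;> rcases hdeg w hw with hw | hw
  · have := card_supp_le_two_of_adj_of_degree_eq_one hvw hv hw
    have := hcomp (G.connectedComponentMk v)
    omega
  · exact h12 v w hvw hv hw
  · exact h12 w v hvw.symm hw hv
  · exact h22 v w hvw hv hw

end SimpleGraph

open SimpleGraph in
theorem forest_many_leaves_general {V : Type*} [Fintype V] [DecidableEq V]
    (G : SimpleGraph V) [DecidableRel G.Adj] (hF : G.IsAcyclic)
    (D n l : ℕ)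
    (hD : Nat.card G.ConnectedComponent = D)
    (hn : Fintype.card V = n)
    (hl : (Finset.univ.filter (fun v => G.degree v = 1)).card = l)
    (hcomp : ∀ c : G.ConnectedComponent, 3 ≤ Nat.card c.supp)
    (h22 : ∀ v w, G.Adj v w → G.degree v = 2 → G.degree w ≠ 2)
    (h12 : ∀ v w, G.Adj v w → G.degree v = 1 → G.degree w ≠ 2) :
    n + 5 * D ≤ 3 * l := by
  subst hD hn hl
  have hpos (v : V) : 1 ≤ G.degree v :=
    one_le_degree_of_one_lt_card_supp <| (hcomp _).trans_lt' (by norm_num)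
  have hlow := sum_degree_filter_le_two_add_card_leaves hpos
  set s : Finset V := {v | G.degree v ≤ 2}
  have hhigh : 3 * #sᶜ ≤ ∑ v ∈ sᶜ, G.degree v := by
    rw [mul_comm, ← smul_eq_mul]
    exact card_nsmul_le_sum _ _ _ fun v hv ↦ Nat.succ_le_of_lt (by simpa [s] using hv)
  have hindep : ∑ v ∈ s, G.degree v ≤ ∑ v ∈ sᶜ, G.degree v :=
    (isIndepSet_filter_degree_le_two hcomp h22 h12).sum_degree_le_sum_degree_compl
  have hhandshake := hF.sum_degrees_add_two_mul_card_connectedComponent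
  rw [← sum_add_sum_compl s] at hhandshake
  have := card_add_card_compl s
  -- With `k = #s` and `c = #sᶜ`: the handshake gives `∑_{sᶜ} deg = 2c + ℓ - 2D`, so `hhigh`
  -- yields `ℓ ≥ c + 2D` and `hindep` yields `k ≤ ℓ + c - D`; add them up.
  omega

/-- Let `F` be a forest with `D ≥ 1` connected components, each with at least `3`
vertices, in which no two vertices of degree 2 are adjacent and no leaf is adjacent to
a vertex of degree 2. Then `3ℓ ≥ n + 5D`, where `n` is the number of vertices and `ℓ`
the number of leaves. -/
theorem forest_many_leaves {V : Type*} [Fintype V] [DecidableEq V]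
    (G : SimpleGraph V) [DecidableRel G.Adj] (hF : G.IsAcyclic)
    (D n l : ℕ)
    (hD : Nat.card G.ConnectedComponent = D) (hD1 : 1 ≤ D)
    (hn : Fintype.card V = n)
    (hl : (Finset.univ.filter (fun v => G.degree v = 1)).card = l)
    (hcomp : ∀ c : G.ConnectedComponent, 3 ≤ Nat.card c.supp)
    (h22 : ∀ v w, G.Adj v w → G.degree v = 2 → G.degree w ≠ 2)
    (h12 : ∀ v w, G.Adj v w → G.degree v = 1 → G.degree w ≠ 2) :
    n + 5 * D ≤ 3 * l :=
  forest_many_leaves_general G hF D n l hD hn hl hcomp h22 h12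
end

section
/- Let T be a tree with n ≥ 3 vertices and l leaves, and let C = {a_1b_1, …, a_kb_k} be a set of k edges of T. Call a vertex touched if it is a leaf of T or an endpoint of an edge of C. Suppose that: (i) no endpoint a_i or b_i is a leaf of T; (ii) the 2k endpoints a_1, …, a_k, b_1, …, b_k are pairwise distinct; (iii) no edge of T outside C has both endpoints touched; (iv) no vertex of degree 2 that is not an endpoint of an edge of C has a touched neighbour; (v) no two adjacent vertices of degree 2 are both non-endpoints of edges of C. Then n + 7 − 3k − 3l + Σ_{i=1}^{k} (deg(a_i) + deg(b_i) − 4) ≤ 2. -/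
/-!
Let `U` consist of the touched vertices and the vertices of degree 2; every vertex outside `U`
has degree at least 3. Conditions (iii)–(v) say that the only edges of `T` inside `U` are the
`k` edges of `C`, so all other edges at vertices of `U` leave `U`, which gives
`∑_U deg ≤ ∑_{V \ U} deg + 2k`. Together with `∑_v (deg v - 2) = -2` for a tree and
`∑_U (deg v - 2) = ∑_i (deg a_i + deg b_i - 4) - l` and `deg a_i, deg b_i ≥ 2`, linear
arithmetic yields the bound.
-/
open Finset

namespace SimpleGraph

variable {V : Type*} [Fintype V]

lemma IsTree.sum_degree_add_two {G : SimpleGraph V} [DecidableRel G.Adj] (hG : G.IsTree) :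
    ∑ v, G.degree v + 2 = 2 * Fintype.card V := by
  have := hG.card_edgeFinset
  rw [G.sum_degrees_eq_twice_card_edges]
  omega

variable (G : SimpleGraph V) [DecidableRel G.Adj]

lemma sum_card_adj_le_sum_degree (s t : Finset V) :
    ∑ v ∈ s, #{w ∈ t | G.Adj v w} ≤ ∑ w ∈ t, G.degree w := by
  rw [show ∑ v ∈ s, #{w ∈ t | G.Adj v w} = ∑ w ∈ t, #{v ∈ s | G.Adj v w} from
    sum_card_bipartiteAbove_eq_sum_card_bipartiteBelow G.Adj]
  gcongr with w
  rw [← card_neighborFinset_eq_degree]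
  exact card_le_card fun v hv => by simpa [adj_comm] using (mem_filter.1 hv).2

variable [DecidableEq V]

lemma degree_eq_card_adj_add_card_adj_compl (s : Finset V) (v : V) :
    G.degree v = #{w ∈ s | G.Adj v w} + #{w ∈ sᶜ | G.Adj v w} := by
  rw [← card_union_of_disjoint (disjoint_compl_right.mono (filter_subset _ _) (filter_subset _ _)),
    ← filter_union, union_compl, ← card_neighborFinset_eq_degree, neighborFinset_eq_filter]

lemma sum_degree_le_sum_degree_compl_add (s : Finset V) :
    ∑ v ∈ s, G.degree v ≤ ∑ v ∈ sᶜ, G.degree v + #{p ∈ s ×ˢ s | G.Adj p.1 p.2} := calc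
  ∑ v ∈ s, G.degree v = ∑ v ∈ s, #{w ∈ sᶜ | G.Adj v w} + ∑ v ∈ s, #{w ∈ s | G.Adj v w} := by
    rw [← sum_add_distrib]
    exact sum_congr rfl fun v _ => by rw [add_comm, G.degree_eq_card_adj_add_card_adj_compl s]
  _ ≤ ∑ v ∈ sᶜ, G.degree v + #{p ∈ s ×ˢ s | G.Adj p.1 p.2} :=
    add_le_add (G.sum_card_adj_le_sum_degree s sᶜ) (by simp only [card_filter, sum_product]; rfl)

end SimpleGraph

section TreeScore

open Function

variable {V : Type*} [DecidableEq V] {k : ℕ}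

def endpoints [Fintype V] (a b : Fin k → V) : Finset V := univ.image (Sum.elim a b)

lemma mem_endpoints [Fintype V] {a b : Fin k → V} {v : V} :
    v ∈ endpoints a b ↔ ∃ i, v = a i ∨ v = b i := by
  simp [endpoints, eq_comm, exists_or]

lemma card_filter_adj_product_le {G : SimpleGraph V} [DecidableRel G.Adj] {a b : Fin k → V}
    {s : Finset V} (h : ∀ v w, G.Adj v w → v ∈ s → w ∈ s →
      ∃ i, (v = a i ∧ w = b i) ∨ (v = b i ∧ w = a i)) :
    #{p ∈ s ×ˢ s | G.Adj p.1 p.2} ≤ 2 * k := calc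
  #{p ∈ s ×ˢ s | G.Adj p.1 p.2}
      ≤ #(univ.image (Sum.elim (fun i => (a i, b i)) (fun i => (b i, a i)))) := by
    refine card_le_card fun p hp => ?_
    obtain ⟨hps, hadj⟩ := mem_filter.1 hp
    obtain ⟨hv, hw⟩ := mem_product.1 hps
    obtain ⟨i, ⟨h1, h2⟩ | ⟨h1, h2⟩⟩ := h _ _ hadj hv hw
    · exact mem_image.2 ⟨Sum.inl i, mem_univ _, Prod.ext h1.symm h2.symm⟩
    · exact mem_image.2 ⟨Sum.inr i, mem_univ _, Prod.ext h1.symm h2.symm⟩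
  _ ≤ 2 * k := card_image_le.trans (by simp [two_mul])

variable [Fintype V] (G : SimpleGraph V) [DecidableRel G.Adj] (a b : Fin k → V)

def touchedOrDegreeTwo : Finset V :=
  {v | (G.degree v = 1 ∨ v ∈ endpoints a b) ∨ G.degree v = 2}

variable {G a b}

lemma exists_eq_of_adj_of_mem_touchedOrDegreeTwo
    (hiii : ∀ u v, G.Adj u v → (G.degree u = 1 ∨ u ∈ endpoints a b) →
      (G.degree v = 1 ∨ v ∈ endpoints a b) → ∃ i, (u = a i ∧ v = b i) ∨ (u = b i ∧ v = a i))
    (hiv : ∀ v, G.degree v = 2 → v ∉ endpoints a b →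
      ∀ w, G.Adj v w → ¬ (G.degree w = 1 ∨ w ∈ endpoints a b))
    (hv : ∀ v w, G.Adj v w → G.degree v = 2 → G.degree w = 2 →
      v ∉ endpoints a b → w ∉ endpoints a b → False)
    {v w : V} (hvw : G.Adj v w) (hvU : v ∈ touchedOrDegreeTwo G a b)
    (hwU : w ∈ touchedOrDegreeTwo G a b) :
    ∃ i, (v = a i ∧ w = b i) ∨ (v = b i ∧ w = a i) := by
  simp only [touchedOrDegreeTwo, mem_filter, mem_univ, true_and] at hvU hwU
  by_cases htv : G.degree v = 1 ∨ v ∈ endpoints a b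
  · by_cases htw : G.degree w = 1 ∨ w ∈ endpoints a b
    · exact hiii v w hvw htv htw
    · exact absurd htv (hiv w (hwU.resolve_left htw) (by tauto) v hvw.symm)
  · by_cases htw : G.degree w = 1 ∨ w ∈ endpoints a b
    · exact absurd htw (hiv v (hvU.resolve_left htv) (by tauto) w hvw)
    · exact (hv v w hvw (hvU.resolve_left htv) (hwU.resolve_left htw) (by tauto) (by tauto)).elim

lemma three_le_degree_of_notMem_touchedOrDegreeTwo (hpos : ∀ v, 0 < G.degree v) {v : V}
    (hv : v ∉ touchedOrDegreeTwo G a b) : 3 ≤ G.degree v := by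
  simp only [touchedOrDegreeTwo, mem_filter, mem_univ, true_and, not_or] at hv
  have := hpos v
  omega

lemma sum_degree_sub_two_touchedOrDegreeTwo (hi : ∀ i, G.degree (a i) ≠ 1 ∧ G.degree (b i) ≠ 1)
    (hii : Injective (Sum.elim a b)) :
    ∑ v ∈ touchedOrDegreeTwo G a b, ((G.degree v : ℤ) - 2)
      = ∑ i, ((G.degree (a i) : ℤ) + G.degree (b i) - 4) - #{v | G.degree v = 1} := by
  have hsub : ({v | G.degree v = 1} : Finset V) ∪ endpoints a b ⊆ touchedOrDegreeTwo G a b :=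
    fun v hv => by
      simp only [touchedOrDegreeTwo, mem_union, mem_filter, mem_univ, true_and] at hv ⊢
      tauto
  have hdisj : Disjoint ({v | G.degree v = 1} : Finset V) (endpoints a b) := by
    refine disjoint_left.2 fun v hv hvF => ?_
    obtain ⟨i, rfl | rfl⟩ := mem_endpoints.1 hvF
    exacts [(hi i).1 (mem_filter.1 hv).2, (hi i).2 (mem_filter.1 hv).2]
  rw [← sum_subset hsub fun v hvU hv => ?_, sum_union hdisj, endpoints,
    sum_image hii.injOn, Fintype.sum_sum_type]
  · have hleaves : ∑ v ∈ ({v | G.degree v = 1} : Finset V), ((G.degree v : ℤ) - 2)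
        = -#({v | G.degree v = 1} : Finset V) := by
      rw [card_eq_sum_ones, Nat.cast_sum, ← sum_neg_distrib]
      exact sum_congr rfl fun v hv => by simp [(mem_filter.1 hv).2]
    rw [hleaves, ← sum_add_distrib, sub_eq_neg_add]
    refine congrArg _ (sum_congr rfl fun i _ => ?_)
    change (G.degree (a i) : ℤ) - 2 + ((G.degree (b i) : ℤ) - 2) = _
    ring
  · simp only [touchedOrDegreeTwo, mem_union, mem_filter, mem_univ, true_and] at hvU hv
    have : G.degree v = 2 := by tauto
    simp [this]

end TreeScore

theorem tree_score_nonpositive_general {V : Type*} [Fintype V]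
    (G : SimpleGraph V) [DecidableRel G.Adj] (hT : G.IsTree)
    (n l k : ℕ) (hn : Fintype.card V = n) (h3 : 3 ≤ n)
    (hl : (Finset.univ.filter (fun v => G.degree v = 1)).card = l)
    (a b : Fin k → V)
    (hi : ∀ i, G.degree (a i) ≠ 1 ∧ G.degree (b i) ≠ 1)
    (hii : Function.Injective (Sum.elim a b))
    (hiii : ∀ u v, G.Adj u v →
      (G.degree u = 1 ∨ ∃ i, u = a i ∨ u = b i) →
      (G.degree v = 1 ∨ ∃ i, v = a i ∨ v = b i) →
      ∃ i, (u = a i ∧ v = b i) ∨ (u = b i ∧ v = a i))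
    (hiv : ∀ v, G.degree v = 2 → (¬ ∃ i, v = a i ∨ v = b i) →
      ∀ w, G.Adj v w → ¬ (G.degree w = 1 ∨ ∃ i, w = a i ∨ w = b i))
    (hv : ∀ v w, G.Adj v w → G.degree v = 2 → G.degree w = 2 →
      (¬ ∃ i, v = a i ∨ v = b i) → (¬ ∃ i, w = a i ∨ w = b i) → False) :
    (n : ℤ) + 7 - 3 * k - 3 * l
      + ∑ i, ((G.degree (a i) : ℤ) + (G.degree (b i) : ℤ) - 4) ≤ 2 := by
  classical
  simp only [← mem_endpoints] at hiii hiv hv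
  have : Nontrivial V := Fintype.one_lt_card_iff_nontrivial.1 (by omega)
  have hpos : ∀ v, 0 < G.degree v := fun v => hT.connected.preconnected.degree_pos_of_nontrivial v
  set U := touchedOrDegreeTwo G a b
  have hcard : #U + #Uᶜ = n := by rw [card_add_card_compl, hn]
  have hsum : ∑ v ∈ U, G.degree v + ∑ v ∈ Uᶜ, G.degree v + 2 = 2 * n := by
    rw [sum_add_sum_compl, hT.sum_degree_add_two, hn]
  have hcross : ∑ v ∈ U, G.degree v ≤ ∑ v ∈ Uᶜ, G.degree v + 2 * k :=
    (G.sum_degree_le_sum_degree_compl_add U).trans (add_le_add_right (card_filter_adj_product_le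
      fun _ _ => exists_eq_of_adj_of_mem_touchedOrDegreeTwo hiii hiv hv) _)
  have hbranch : #Uᶜ * 3 ≤ ∑ v ∈ Uᶜ, G.degree v := card_nsmul_le_sum _ _ _ fun v hv =>
    three_le_degree_of_notMem_touchedOrDegreeTwo hpos (mem_compl.1 hv)
  have hexcess := sum_degree_sub_two_touchedOrDegreeTwo hi hii
  have hE : 0 ≤ ∑ i, ((G.degree (a i) : ℤ) + (G.degree (b i) : ℤ) - 4) := sum_nonneg fun i _ => by
    have := hpos (a i); have := hpos (b i); have := hi i; omega
  rw [sum_sub_distrib, sum_const, nsmul_eq_mul, hl] at hexcess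
  zify at hcard hsum hcross hbranch
  linarith

/-- Let `T` be a tree with `n ≥ 3` vertices and `l` leaves, and let
`C = {a_1 b_1, …, a_k b_k}` be a set of `k` edges of `T`. A vertex is touched if it is a
leaf of `T` or an endpoint of an edge of `C`. Suppose: (i) no `a_i` or `b_i` is a leaf;
(ii) the `2k` endpoints are pairwise distinct; (iii) no edge of `T` outside `C` has both
endpoints touched; (iv) no vertex of degree 2 that is not an endpoint of an edge of `C`
has a touched neighbour; (v) no two adjacent vertices of degree 2 are both
non-endpoints of edges of `C`. Then
`n + 7 − 3k − 3l + Σ_i (deg(a_i) + deg(b_i) − 4) ≤ 2`. -/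
theorem tree_score_nonpositive {V : Type*} [Fintype V] [DecidableEq V]
    (G : SimpleGraph V) [DecidableRel G.Adj] (hT : G.IsTree)
    (n l k : ℕ) (hn : Fintype.card V = n) (h3 : 3 ≤ n)
    (hl : (Finset.univ.filter (fun v => G.degree v = 1)).card = l)
    (a b : Fin k → V) (hedge : ∀ i, G.Adj (a i) (b i))
    (hi : ∀ i, G.degree (a i) ≠ 1 ∧ G.degree (b i) ≠ 1)
    (hii : Function.Injective (Sum.elim a b))
    (hiii : ∀ u v, G.Adj u v →
      (G.degree u = 1 ∨ ∃ i, u = a i ∨ u = b i) →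
      (G.degree v = 1 ∨ ∃ i, v = a i ∨ v = b i) →
      ∃ i, (u = a i ∧ v = b i) ∨ (u = b i ∧ v = a i))
    (hiv : ∀ v, G.degree v = 2 → (¬ ∃ i, v = a i ∨ v = b i) →
      ∀ w, G.Adj v w → ¬ (G.degree w = 1 ∨ ∃ i, w = a i ∨ w = b i))
    (hv : ∀ v w, G.Adj v w → G.degree v = 2 → G.degree w = 2 →
      (¬ ∃ i, v = a i ∨ v = b i) → (¬ ∃ i, w = a i ∨ w = b i) → False) :
    (n : ℤ) + 7 - 3 * k - 3 * l
      + ∑ i, ((G.degree (a i) : ℤ) + (G.degree (b i) : ℤ) - 4) ≤ 2 :=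
  tree_score_nonpositive_general G hT n l k hn h3 hl a b hi hii hiii hiv hv
end
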